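/- arXiv:1109.6277 — 5 statements merged into one kernel-verified Lean document; each statement's English description precedes it below -/
import Mathlib

section
/- Let G be a graph on n = 2m ≥ 4 vertices that is the disjoint union of m copies of K₂. Then for every vertex v, DV_G(v) + DV_{Ḡ}(v) = n − 1 + 2^{n/2 − 1}, where Ḡ is the complement of G. -/
/-- `D` is a dominating set of `G`: every vertex not in `D` is adjacent to a vertex of `D`. -/
def IsDomSet {V : Type*} (G : SimpleGraph V) (D : Finset V) : Prop :=
  ∀ v, v ∉ D → ∃ u ∈ D, G.Adj u v

/-- The domination number `γ(G)`: the minimum cardinality of a dominating set. -/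
noncomputable def domNum {V : Type*} (G : SimpleGraph V) : ℕ :=
  sInf {n | ∃ D : Finset V, IsDomSet G D ∧ D.card = n}

/-- The collection of minimum dominating sets of `G`. -/
def minDomSets {V : Type*} (G : SimpleGraph V) : Set (Finset V) :=
  {D | IsDomSet G D ∧ D.card = domNum G}

/-- `τ(G)`: the number of minimum dominating sets of `G`. -/
noncomputable def tau {V : Type*} (G : SimpleGraph V) : ℕ :=
  (minDomSets G).ncard

/-- `DV(v)`: the number of minimum dominating sets of `G` containing `v`. -/
noncomputable def DV {V : Type*} (G : SimpleGraph V) (v : V) : ℕ :=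
  {D ∈ minDomSets G | v ∈ D}.ncard

/-- The perfect matching `mK₂`: `m` disjoint copies of `K₂`, on vertex set `Fin m × Fin 2`. -/
def matchingGraph (m : ℕ) : SimpleGraph (Fin m × Fin 2) where
  Adj x y := x.1 = y.1 ∧ x.2 ≠ y.2
  symm := ⟨fun x y h => ⟨h.1.symm, h.2.symm⟩⟩
  loopless := ⟨fun x h => h.2 rfl⟩

/-!
A dominating set of `mK₂` must meet every edge, so the minimum dominating sets are the `2 ^ m`
transversals picking one endpoint of each edge, and `2 ^ (m - 1)` of them contain `v`.
In the complement no single vertex dominates (it misses its partner), while any two vertices do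
(a vertex adjacent in `mK₂` to both would have two partners); so the minimum dominating sets of
the complement are all pairs, and `n - 1` of them contain `v`.
-/

theorem Nat.card_fun_eq_at {α β : Type*} [Finite α] [DecidableEq α] (a : α) (b : β) :
    Nat.card {f : α → β // f a = b} = Nat.card β ^ (Nat.card α - 1) := by
  have e : {f : α → β // f a = b} ≃ ({j // j ≠ a} → β) :=
    ((Equiv.piSplitAt a fun _ => β).subtypeEquiv (p := fun f => f a = b) (q := fun p => p.1 = b)
      fun _ => Iff.rfl).trans
      (Equiv.prodSubtypeFstEquivSubtypeProd.trans (Equiv.uniqueProd _ {x : β // x = b}))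
  rw [Nat.card_congr e, Nat.card_fun, ← Set.ncard_singleton a, ← Set.ncard_compl,
    ← Nat.card_coe_set_eq]
  rfl

section Domination

variable {V : Type*} {G : SimpleGraph V}

lemma domNum_eq_of_forall_le {k : ℕ} (hex : ∃ D, IsDomSet G D ∧ D.card = k)
    (hle : ∀ D, IsDomSet G D → k ≤ D.card) : domNum G = k :=
  IsLeast.csInf_eq ⟨hex, by rintro n ⟨D, hD, rfl⟩; exact hle D hD⟩

end Domination

section ComplOfPerfectMatching

variable {V : Type*} {G : SimpleGraph V}

lemma isDomSet_compl_of_card_eq_two (hG : ∀ u, ∃! w, G.Adj u w) {D : Finset V}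
    (hD : D.card = 2) : IsDomSet Gᶜ D := by
  classical
  obtain ⟨a, b, hab, rfl⟩ := Finset.card_eq_two.mp hD
  intro w hw
  simp only [Finset.mem_insert, Finset.mem_singleton, not_or] at hw
  by_cases haw : G.Adj a w
  · refine ⟨b, by simp, fun hbw => hw.2 hbw.symm, fun hbw => hab ?_⟩
    exact (hG w).unique haw.symm hbw.symm
  · exact ⟨a, by simp, fun h => hw.1 h.symm, haw⟩

lemma two_le_card_of_isDomSet_compl [Nonempty V] (hG : ∀ u, ∃! w, G.Adj u w) {D : Finset V}
    (hD : IsDomSet Gᶜ D) : 2 ≤ D.card := by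
  by_contra! hlt
  obtain ⟨x, hx⟩ := Finset.card_le_one_iff_subset_singleton.mp (Nat.lt_succ_iff.mp hlt)
  obtain ⟨w, hxw, -⟩ := hG x
  have hw : w ∉ D := fun hw => G.ne_of_adj hxw (Finset.mem_singleton.mp (hx hw)).symm
  obtain ⟨u, hu, hcompl⟩ := hD w hw
  rw [Finset.mem_singleton.mp (hx hu)] at hcompl
  exact hcompl.2 hxw

lemma domNum_compl_eq_two [Nonempty V] (hG : ∀ u, ∃! w, G.Adj u w) : domNum Gᶜ = 2 := by
  classical
  obtain ⟨w, hw, -⟩ := hG (Classical.arbitrary V)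
  have hcard := Finset.card_pair (G.ne_of_adj hw)
  exact domNum_eq_of_forall_le ⟨_, isDomSet_compl_of_card_eq_two hG hcard, hcard⟩
    fun _ => two_le_card_of_isDomSet_compl hG

lemma minDomSets_compl [Nonempty V] (hG : ∀ u, ∃! w, G.Adj u w) :
    minDomSets Gᶜ = {D | D.card = 2} := by
  ext D
  simp only [minDomSets, Set.mem_ofPred_eq, domNum_compl_eq_two hG]
  exact ⟨And.right, fun h => ⟨isDomSet_compl_of_card_eq_two hG h, h⟩⟩

lemma DV_compl [Finite V] (hG : ∀ u, ∃! w, G.Adj u w) (v : V) :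
    DV Gᶜ v = Nat.card V - 1 := by
  classical
  have : Nonempty V := ⟨v⟩
  have hpairs : {D ∈ minDomSets Gᶜ | v ∈ D} = (fun u => {v, u}) '' {v}ᶜ := by
    ext D
    simp only [minDomSets_compl hG, Set.mem_ofPred_eq, Set.mem_image, Set.mem_compl_singleton_iff]
    constructor
    · rintro ⟨hD, hv⟩
      obtain ⟨a, b, hab, rfl⟩ := Finset.card_eq_two.mp hD
      rcases Finset.mem_insert.mp hv with rfl | hb
      · exact ⟨b, hab.symm, rfl⟩
      · obtain rfl := Finset.mem_singleton.mp hb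
        exact ⟨a, hab, Finset.pair_comm _ _⟩
    · rintro ⟨u, hu, rfl⟩
      exact ⟨Finset.card_pair hu.symm, Finset.mem_insert_self _ _⟩
  have hinj : Set.InjOn (fun u => ({v, u} : Finset V)) {v}ᶜ := fun u₁ hu₁ u₂ _ h => by
    have : u₁ ∈ ({v, u₂} : Finset V) := by
      rw [← show ({v, u₁} : Finset V) = {v, u₂} from h]
      simp
    simpa [Set.mem_compl_singleton_iff.mp hu₁] using this
  rw [DV, hpairs, hinj.ncard_image, Set.ncard_compl, Set.ncard_singleton]

end ComplOfPerfectMatching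

section MatchingGraph

variable {m : ℕ}

lemma matchingGraph_existsUnique_adj (u : Fin m × Fin 2) : ∃! w, (matchingGraph m).Adj u w :=
  ⟨(u.1, u.2 + 1), ⟨rfl, by dsimp; omega⟩,
    fun _ ⟨hfst, hsnd⟩ => Prod.ext hfst.symm (by dsimp; omega)⟩

def transversal (f : Fin m → Fin 2) : Finset (Fin m × Fin 2) :=
  Finset.univ.image fun i => (i, f i)

lemma mem_transversal {f : Fin m → Fin 2} {x : Fin m × Fin 2} :
    x ∈ transversal f ↔ f x.1 = x.2 := by
  simp [transversal, Prod.ext_iff, eq_comm]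

lemma card_transversal (f : Fin m → Fin 2) : (transversal f).card = m := by
  rw [transversal, Finset.card_image_of_injective _ fun i j h => congrArg Prod.fst h]
  simp

lemma transversal_injective : Function.Injective (transversal (m := m)) := fun f g h =>
  funext fun i =>
    (mem_transversal.mp (h ▸ mem_transversal.mpr rfl : (i, f i) ∈ transversal g)).symm

lemma isDomSet_transversal (f : Fin m → Fin 2) : IsDomSet (matchingGraph m) (transversal f) :=
  fun v hv => ⟨(v.1, f v.1), mem_transversal.mpr rfl, rfl, fun h => hv (mem_transversal.mpr h)⟩

lemma le_card_of_isDomSet_matchingGraph {D : Finset (Fin m × Fin 2)}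
    (hD : IsDomSet (matchingGraph m) D) : m ≤ D.card := by
  have hcover : Finset.univ ⊆ D.image Prod.fst := fun i _ => by
    by_cases h : (i, 0) ∈ D
    · exact Finset.mem_image.mpr ⟨_, h, rfl⟩
    · obtain ⟨u, hu, hadj⟩ := hD (i, 0) h
      exact Finset.mem_image.mpr ⟨u, hu, hadj.1⟩
  simpa using (Finset.card_le_card hcover).trans Finset.card_image_le

lemma domNum_matchingGraph : domNum (matchingGraph m) = m :=
  domNum_eq_of_forall_le ⟨_, isDomSet_transversal 0, card_transversal 0⟩
    fun _ => le_card_of_isDomSet_matchingGraph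

lemma minDomSets_matchingGraph : minDomSets (matchingGraph m) = Set.range transversal := by
  classical
  ext D
  simp only [minDomSets, domNum_matchingGraph, Set.mem_ofPred_eq, Set.mem_range]
  constructor
  · rintro ⟨hD, hcard⟩
    refine ⟨fun i => if (i, 0) ∈ D then 0 else 1, ?_⟩
    refine Finset.eq_of_subset_of_card_le (fun x hx => ?_) (by rw [hcard, card_transversal])
    have hx := mem_transversal.mp hx
    split_ifs at hx with h
    · rwa [hx] at h
    · obtain ⟨u, hu, hux, hu2⟩ := hD (x.1, 0) h
      convert hu using 1
      exact Prod.ext hux.symm (by dsimp at hu2; omega)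
  · rintro ⟨f, rfl⟩
    exact ⟨isDomSet_transversal f, card_transversal f⟩

lemma DV_matchingGraph (v : Fin m × Fin 2) : DV (matchingGraph m) v = 2 ^ (m - 1) := by
  have hsets :
      {D ∈ minDomSets (matchingGraph m) | v ∈ D} = transversal '' {f | f v.1 = v.2} := by
    ext D
    simp only [minDomSets_matchingGraph, Set.mem_range, Set.mem_image, Set.mem_ofPred_eq]
    constructor
    · rintro ⟨⟨f, rfl⟩, hv⟩
      exact ⟨f, mem_transversal.mp hv, rfl⟩
    · rintro ⟨f, hf, rfl⟩
      exact ⟨⟨f, rfl⟩, mem_transversal.mpr hf⟩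
  rw [DV, hsets, transversal_injective.injOn.ncard_image, ← Nat.card_coe_set_eq]
  exact (Nat.card_fun_eq_at v.1 v.2).trans (by simp)

end MatchingGraph

theorem stmt_6_general (m : ℕ) (v : Fin m × Fin 2) :
    DV (matchingGraph m) v + DV (matchingGraph m)ᶜ v = (2 * m - 1) + 2 ^ (m - 1) := by
  rw [DV_matchingGraph, DV_compl matchingGraph_existsUnique_adj, Nat.card_prod, Nat.card_fin,
    Nat.card_fin, Nat.add_comm, Nat.mul_comm]

theorem stmt_6 (m : ℕ) (hm : 2 ≤ m) (v : Fin m × Fin 2) :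
    DV (matchingGraph m) v + DV (matchingGraph m)ᶜ v = (2 * m - 1) + 2 ^ (m - 1) :=
  stmt_6_general m v
end

section
/- Let G be a graph of order n ≥ 3 with maximum degree Δ(G) = n − 2. Then γ(G) = 2, DV(v) ≤ n − 1 for all vertices v, and if deg(v) = n − 2 then DV(v) = |N[w]| where w is the unique vertex not adjacent to v (and w ≠ v). -/
open Finset SimpleGraph

section

variable {V : Type*} {G : SimpleGraph V}

lemma SimpleGraph.adj_of_degree_eq_card_sub_two [Fintype V] [DecidableRel G.Adj] {v w x : V}
    (hdeg : G.degree v = Fintype.card V - 2) (hwv : w ≠ v) (hvw : ¬ G.Adj v w)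
    (hxv : x ≠ v) (hxw : x ≠ w) : G.Adj v x := by
  classical
  have hsub : G.neighborFinset v ⊆ (univ.erase v).erase w := fun y hy => by
    rw [mem_neighborFinset] at hy
    simp only [mem_erase, mem_univ, and_true]
    exact ⟨fun h => hvw (h ▸ hy), hy.ne'⟩
  have hcard : ((univ.erase v).erase w).card ≤ (G.neighborFinset v).card := by
    rw [card_erase_of_mem (by simpa using hwv), card_erase_of_mem (mem_univ v), card_univ,
      card_neighborFinset_eq_degree, hdeg]
    omega
  rw [← mem_neighborFinset, eq_of_subset_of_card_le hsub hcard]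
  simp [hxv, hxw]

namespace IsDomSet

lemma nonempty [Nonempty V] {D : Finset V} (hD : IsDomSet G D) : D.Nonempty := by
  obtain ⟨x⟩ := ‹Nonempty V›
  by_cases hx : x ∈ D
  · exact ⟨x, hx⟩
  · obtain ⟨u, hu, -⟩ := hD x hx
    exact ⟨u, hu⟩

lemma isUniversal_of_singleton {u : V} (h : IsDomSet G {u}) : G.IsUniversal u := by
  intro x hux
  obtain ⟨u', hu', hadj⟩ := h x (by simpa using hux.symm)
  rwa [mem_singleton.mp hu'] at hadj

lemma two_le_card [Nonempty V] (hG : ∀ u, ¬ G.IsUniversal u) {D : Finset V}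
    (hD : IsDomSet G D) : 2 ≤ D.card := by
  by_contra! h
  obtain ⟨u, rfl⟩ : ∃ u, D = {u} := card_eq_one.mp (by have := hD.nonempty.card_pos; omega)
  exact hG u hD.isUniversal_of_singleton

end IsDomSet

lemma isDomSet_pair_iff [Fintype V] [DecidableEq V] [DecidableRel G.Adj] {v w u : V} (hwv : w ≠ v)
    (hvw : ¬ G.Adj v w) (hv : ∀ x, x ≠ v → x ≠ w → G.Adj v x) :
    IsDomSet G {v, u} ↔ u ∈ insert w (G.neighborFinset w) := by
  rw [mem_insert, mem_neighborFinset]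
  constructor
  · intro h
    by_cases huw : u = w
    · exact Or.inl huw
    obtain ⟨c, hc, hadj⟩ := h w (by simp [hwv, Ne.symm huw])
    rcases mem_insert.mp hc with rfl | hc
    · exact absurd hadj hvw
    · exact Or.inr (mem_singleton.mp hc ▸ hadj.symm)
  · intro hu x hx
    simp only [mem_insert, mem_singleton, not_or] at hx
    by_cases hxw : x = w
    · subst hxw
      refine ⟨u, by simp, ?_⟩
      rcases hu with rfl | hu
      · exact absurd rfl hx.2
      · exact hu.symm
    · exact ⟨v, by simp, hv x hx.1 hxw⟩

lemma domNum_eq_of_isLeast {k : ℕ} (h : ∃ D, IsDomSet G D ∧ D.card = k)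
    (hle : ∀ D, IsDomSet G D → k ≤ D.card) : domNum G = k :=
  IsLeast.csInf_eq ⟨h, by rintro _ ⟨D, hD, rfl⟩; exact hle D hD⟩

lemma DV_eq_ncard_of_domNum_eq_two [DecidableEq V] (h2 : domNum G = 2) (v : V) :
    DV G v = {u | u ≠ v ∧ IsDomSet G {v, u}}.ncard := by
  have hinj : Set.InjOn (fun u : V => ({v, u} : Finset V)) {u | u ≠ v ∧ IsDomSet G {v, u}} := by
    intro a ha b _ hab
    have : a ∈ ({v, b} : Finset V) := by
      rw [← show ({v, a} : Finset V) = {v, b} from hab]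
      simp
    simpa [ha.1] using this
  rw [DV, ← hinj.ncard_image]
  congr 1
  ext D
  constructor
  · rintro ⟨⟨hD, hcard⟩, hvD⟩
    have hcard_erase : (D.erase v).card = 1 := by rw [card_erase_of_mem hvD, hcard, h2]
    obtain ⟨u, hu⟩ := card_eq_one.mp hcard_erase
    have hD_eq : D = {v, u} := by rw [← hu, insert_erase hvD]
    have huv : u ≠ v := ne_of_mem_erase (hu ▸ mem_singleton_self u)
    exact ⟨u, ⟨huv, hD_eq ▸ hD⟩, hD_eq.symm⟩
  · rintro ⟨u, ⟨huv, hdom⟩, rfl⟩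
    exact ⟨⟨hdom, by rw [h2, card_pair huv.symm]⟩, by simp⟩

lemma DV_le_card_sub_one [Fintype V] (h2 : domNum G = 2) (v : V) :
    DV G v ≤ Fintype.card V - 1 := by
  classical
  rw [DV_eq_ncard_of_domNum_eq_two h2]
  calc _ ≤ ({v}ᶜ : Set V).ncard := Set.ncard_le_ncard fun u hu => hu.1
    _ = Fintype.card V - 1 := by
      rw [Set.ncard_compl, Set.ncard_singleton, Nat.card_eq_fintype_card]

lemma DV_eq_card_closedNeighborhood [Fintype V] [DecidableEq V] [DecidableRel G.Adj]
    (h2 : domNum G = 2) {v w : V} (hdeg : G.degree v = Fintype.card V - 2) (hwv : w ≠ v)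
    (hvw : ¬ G.Adj v w) : DV G v = (insert w (G.neighborFinset w)).card := by
  have hv_notMem : v ∉ insert w (G.neighborFinset w) := by
    simpa [hwv.symm] using fun h : G.Adj w v => hvw h.symm
  rw [DV_eq_ncard_of_domNum_eq_two h2, ← Set.ncard_coe_finset]
  congr 1
  ext u
  rw [Set.mem_ofPred_eq, mem_coe,
    isDomSet_pair_iff hwv hvw fun x => G.adj_of_degree_eq_card_sub_two hdeg hwv hvw]
  exact ⟨And.right, fun hu => ⟨fun huv => hv_notMem (huv ▸ hu), hu⟩⟩

end

theorem stmt_8 {V : Type*} [Fintype V] [DecidableEq V] (G : SimpleGraph V)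
    [DecidableRel G.Adj] (n : ℕ) (hn : Fintype.card V = n) (hn3 : 3 ≤ n)
    (hΔ : G.maxDegree = n - 2) :
    domNum G = 2 ∧ (∀ v : V, DV G v ≤ n - 1) ∧
    ∀ v w : V, G.degree v = n - 2 → w ≠ v → ¬ G.Adj v w →
      DV G v = (insert w (G.neighborFinset w)).card := by
  subst hn
  have : Nonempty V := Fintype.card_pos_iff.mp (by omega)
  have hnu (u : V) : ¬ G.IsUniversal u :=
    (G.degree_lt_card_sub_one u).mp (by have := G.degree_le_maxDegree u; omega)
  obtain ⟨v₀, hv₀⟩ := G.exists_maximal_degree_vertex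
  obtain ⟨w₀, hvw₀, hadj₀⟩ : ∃ w, v₀ ≠ w ∧ ¬ G.Adj v₀ w := by
    simpa [SimpleGraph.IsUniversal] using hnu v₀
  have hpair : IsDomSet G {v₀, w₀} :=
    (isDomSet_pair_iff hvw₀.symm hadj₀ fun _ =>
      G.adj_of_degree_eq_card_sub_two (hv₀ ▸ hΔ) hvw₀.symm hadj₀).mpr (mem_insert_self _ _)
  have h2 : domNum G = 2 :=
    domNum_eq_of_isLeast ⟨_, hpair, card_pair hvw₀⟩ fun _ hD => hD.two_le_card hnu
  exact ⟨h2, DV_le_card_sub_one h2, fun v w hdeg hwv hvw =>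
    DV_eq_card_closedNeighborhood h2 hdeg hwv hvw⟩
end

section
/- For the cycle C_n with n ≥ 3: τ(C_n) = 3 if n ≡ 0 (mod 3); τ(C_n) = n(1 + ⌊n/3⌋/2) if n ≡ 1 (mod 3); and τ(C_n) = n if n ≡ 2 (mod 3). -/
/-!
The rotations of the cycle are automorphisms, so every vertex lies in the same number `DV(0)` of
minimum dominating sets, and double counting pairs (vertex, minimum dominating set containing it)
gives `n * DV(0) = γ * τ`. Cutting the cycle open at `0` turns a dominating set `D ∋ 0` into the
partial sums of a composition of `n` into `|D|` parts of size at most `3`. The number `c(n, r)` of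
such compositions satisfies `c(n, r + 1) = c(n - 1, r) + c(n - 2, r) + c(n - 3, r)`, whence
`γ = ⌈n / 3⌉` and, with `k = ⌊n / 3⌋`, `c(3k, k) = 1`, `c(3k + 1, k + 1) = (k + 1)(k + 2) / 2`
and `c(3k + 2, k + 1) = k + 1`.
-/

open Finset

section Domination

variable {V W : Type*} {G : SimpleGraph V} {H : SimpleGraph W}

lemma IsDomSet.map {D : Finset V} (hD : IsDomSet G D) (φ : G ≃g H) :
    IsDomSet H (D.map φ.toEquiv.toEmbedding) := by
  intro w hw
  obtain ⟨u, hu, hadj⟩ :=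
    hD (φ.symm w) fun h => hw (mem_map.2 ⟨_, h, φ.apply_symm_apply w⟩)
  exact ⟨φ u, mem_map_of_mem _ hu, by simpa using φ.map_adj_iff.2 hadj⟩

lemma isDomSet_map_iff (φ : G ≃g H) {D : Finset V} :
    IsDomSet H (D.map φ.toEquiv.toEmbedding) ↔ IsDomSet G D :=
  ⟨fun h => by simpa [Finset.map_map] using h.map φ.symm, fun h => h.map φ⟩

lemma domNum_congr (φ : G ≃g H) : domNum H = domNum G := by
  unfold domNum
  congr 1
  ext k
  constructor
  · rintro ⟨D, hD, rfl⟩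
    exact ⟨D.map φ.symm.toEquiv.toEmbedding, hD.map φ.symm, card_map _⟩
  · rintro ⟨D, hD, rfl⟩
    exact ⟨D.map φ.toEquiv.toEmbedding, hD.map φ, card_map _⟩

lemma map_mem_minDomSets_iff (φ : G ≃g H) {D : Finset V} :
    D.map φ.toEquiv.toEmbedding ∈ minDomSets H ↔ D ∈ minDomSets G := by
  simp only [minDomSets, Set.mem_ofPred_eq, isDomSet_map_iff, card_map, domNum_congr φ]

lemma DV_congr (φ : G ≃g H) (v : V) : DV H (φ v) = DV G v := by
  have himage : {D ∈ minDomSets H | φ v ∈ D}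
      = (fun D => D.map φ.toEquiv.toEmbedding) '' {D ∈ minDomSets G | v ∈ D} := by
    ext D
    constructor
    · rintro ⟨hD, hv⟩
      refine ⟨D.map φ.symm.toEquiv.toEmbedding, ⟨?_, ?_⟩, by simp [Finset.map_map]⟩
      · rw [← map_mem_minDomSets_iff φ]
        simpa [Finset.map_map] using hD
      · simpa using mem_map_of_mem φ.symm.toEquiv.toEmbedding hv
    · rintro ⟨E, ⟨hE, hv⟩, rfl⟩
      exact ⟨(map_mem_minDomSets_iff φ).2 hE, mem_map_of_mem _ hv⟩
  rw [DV, DV, himage, Set.ncard_image_of_injective _ (Finset.map_injective _)]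

lemma domNum_le {D : Finset V} (hD : IsDomSet G D) : domNum G ≤ #D :=
  Nat.sInf_le ⟨D, hD, rfl⟩

lemma exists_isDomSet_card_eq_domNum [Fintype V] : ∃ D, IsDomSet G D ∧ #D = domNum G :=
  Nat.sInf_mem (s := {n | ∃ D : Finset V, IsDomSet G D ∧ #D = n})
    ⟨_, univ, fun v hv => absurd (mem_univ v) hv, rfl⟩

lemma IsDomSet.card_le [Fintype V] [DecidableRel G.Adj] {D : Finset V} (hD : IsDomSet G D) :
    Fintype.card V ≤ (G.maxDegree + 1) * #D := by
  classical
  have hcover : (univ : Finset V) ⊆ D.biUnion fun d => insert d (G.neighborFinset d) := by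
    intro v _
    by_cases hv : v ∈ D
    · exact mem_biUnion.2 ⟨v, hv, mem_insert_self _ _⟩
    · obtain ⟨u, hu, hadj⟩ := hD v hv
      exact mem_biUnion.2 ⟨u, hu, mem_insert_of_mem ((G.mem_neighborFinset u v).2 hadj)⟩
  calc Fintype.card V ≤ #(D.biUnion fun d => insert d (G.neighborFinset d)) := card_le_card hcover
    _ ≤ ∑ d ∈ D, #(insert d (G.neighborFinset d)) := card_biUnion_le
    _ ≤ ∑ _d ∈ D, (G.maxDegree + 1) :=
      sum_le_sum fun d _ => (card_insert_le _ _).trans (by simpa using G.degree_le_maxDegree d)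
    _ = (G.maxDegree + 1) * #D := by rw [sum_const, smul_eq_mul, mul_comm]

lemma card_mul_DV_eq_domNum_mul_tau [Fintype V] (v : V)
    (htrans : ∀ w, ∃ φ : G ≃g G, φ v = w) :
    Fintype.card V * DV G v = domNum G * tau G := by
  classical
  have hfin : (minDomSets G).Finite := Set.toFinite _
  have hDV : ∀ w, #{D ∈ hfin.toFinset | w ∈ D} = DV G v := by
    intro w
    obtain ⟨φ, rfl⟩ := htrans w
    rw [← DV_congr φ v, DV, ← Set.ncard_coe_finset]
    congr 1
    ext D
    simp
  rw [← sum_card hDV, sum_congr rfl fun D hD => ((hfin.mem_toFinset).1 hD).2, sum_const,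
    smul_eq_mul, tau, Set.ncard_eq_toFinset_card _ hfin, mul_comm]

end Domination

section Compositions

/-- The partial sums of a composition of `n` into parts of size at most `3`. -/
structure IsStepSet (n : ℕ) (U : Finset ℕ) : Prop where
  subset_range : U ⊆ range (n + 1)
  zero_mem : 0 ∈ U
  self_mem : n ∈ U
  exists_mem_window : ∀ u, u + 2 ≤ n → ∃ w ∈ U, u ≤ w ∧ w ≤ u + 2

open scoped Classical in
/-- The compositions of `n` into `r` parts of size at most `3`, as their `r + 1` partial sums. -/
noncomputable def stepSets (n r : ℕ) : Finset (Finset ℕ) :=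
  {U ∈ (range (n + 1)).powerset | IsStepSet n U ∧ #U = r + 1}

variable {m n r : ℕ} {U : Finset ℕ}

lemma mem_stepSets : U ∈ stepSets n r ↔ IsStepSet n U ∧ #U = r + 1 := by
  classical
  rw [stepSets, mem_filter, mem_powerset, and_iff_right_iff_imp]
  exact fun h => h.1.subset_range

lemma IsStepSet.le_of_mem (hU : IsStepSet n U) {x : ℕ} (hx : x ∈ U) : x ≤ n :=
  Nat.lt_succ_iff.1 (mem_range.1 (hU.subset_range hx))

lemma IsStepSet.insert (hU : IsStepSet m U) (hmn : m < n) (hnm : n ≤ m + 3) :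
    IsStepSet n (insert n U) := by
  refine ⟨insert_subset (self_mem_range_succ n)
    (hU.subset_range.trans (range_subset_range.2 (by omega))), mem_insert_of_mem hU.zero_mem,
    mem_insert_self n U, fun u hu => ?_⟩
  by_cases hum : u + 2 ≤ m
  · obtain ⟨w, hw, hw'⟩ := hU.exists_mem_window u hum
    exact ⟨w, mem_insert_of_mem hw, hw'⟩
  · by_cases hmu : u ≤ m
    · exact ⟨m, mem_insert_of_mem hU.self_mem, hmu, by omega⟩
    · exact ⟨n, mem_insert_self n U, by omega, by omega⟩

lemma IsStepSet.erase (hU : IsStepSet n U) (hn : n ≠ 0) :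
    ∃ m < n, n ≤ m + 3 ∧ IsStepSet m (U.erase n) := by
  have hne : (U.erase n).Nonempty := ⟨0, mem_erase.2 ⟨hn.symm, hU.zero_mem⟩⟩
  have hlt : ∀ x ∈ U.erase n, x < n := fun x hx =>
    lt_of_le_of_ne (hU.le_of_mem (mem_of_mem_erase hx)) (ne_of_mem_erase hx)
  refine ⟨(U.erase n).max' hne, hlt _ (max'_mem _ _), ?_, fun x hx => ?_,
    mem_erase.2 ⟨hn.symm, hU.zero_mem⟩, max'_mem _ _, fun u hu => ?_⟩
  · by_contra! h
    obtain ⟨w, hw, hw'⟩ := hU.exists_mem_window (n - 3) (by omega)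
    have hwn : w ≠ n := by omega
    have := le_max' _ w (mem_erase.2 ⟨hwn, hw⟩)
    omega
  · exact mem_range.2 (Nat.lt_succ_of_le (le_max' _ x hx))
  · have hun : u + 2 < n := lt_of_le_of_lt hu (hlt _ (max'_mem _ _))
    obtain ⟨w, hw, hw'⟩ := hU.exists_mem_window u (by omega)
    exact ⟨w, mem_erase.2 ⟨by omega, hw⟩, hw'⟩

lemma stepSets_zero_zero : stepSets 0 0 = {{0}} := by
  ext U
  rw [mem_stepSets, mem_singleton, card_eq_one]
  constructor
  · rintro ⟨hU, a, rfl⟩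
    rw [mem_singleton.1 hU.zero_mem]
  · rintro rfl
    exact ⟨⟨by simp, mem_singleton_self 0, mem_singleton_self 0, by omega⟩, 0, rfl⟩

lemma stepSets_succ_zero : stepSets (n + 1) 0 = ∅ := by
  refine eq_empty_of_forall_notMem fun U hU => ?_
  obtain ⟨hU, hcard⟩ := mem_stepSets.1 hU
  obtain ⟨a, rfl⟩ := card_eq_one.1 hcard
  have h0 := mem_singleton.1 hU.zero_mem
  have h1 := mem_singleton.1 hU.self_mem
  omega

/-- Removing the last part of a composition. -/
lemma card_stepSets_succ : #(stepSets n (r + 1)) = ∑ m ∈ Ico (n - 3) n, #(stepSets m r) := by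
  have hdisj : (Ico (n - 3) n : Set ℕ).PairwiseDisjoint (stepSets · r) := by
    intro m _ m' _ hmm'
    refine disjoint_left.2 fun V hV hV' => hmm' (le_antisymm ?_ ?_)
    · exact (mem_stepSets.1 hV').1.le_of_mem (mem_stepSets.1 hV).1.self_mem
    · exact (mem_stepSets.1 hV).1.le_of_mem (mem_stepSets.1 hV').1.self_mem
  have hnotMem : ∀ V ∈ (Ico (n - 3) n).biUnion (stepSets · r), n ∉ V := by
    intro V hV hn
    obtain ⟨m, hm, hV⟩ := mem_biUnion.1 hV
    have := (mem_stepSets.1 hV).1.le_of_mem hn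
    have := (mem_Ico.1 hm).2
    omega
  have hinj : Set.InjOn (insert n) ((Ico (n - 3) n).biUnion (stepSets · r) : Set (Finset ℕ)) :=
    fun V hV V' hV' h => by
      rw [← erase_insert (hnotMem V hV), h, erase_insert (hnotMem V' hV')]
  rw [← card_biUnion hdisj, ← card_image_of_injOn hinj]
  congr 1
  ext U
  simp only [mem_image, mem_biUnion, mem_Ico, mem_stepSets]
  constructor
  · rintro ⟨hU, hcard⟩
    have hn : n ≠ 0 := by
      rintro rfl
      have := card_le_card hU.subset_range
      rw [card_range] at this
      omega
    obtain ⟨m, hmn, hnm, hm⟩ := hU.erase hn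
    refine ⟨U.erase n, ⟨m, ⟨by omega, hmn⟩, hm, ?_⟩, insert_erase hU.self_mem⟩
    rw [card_erase_of_mem hU.self_mem, hcard, Nat.add_sub_cancel]
  · rintro ⟨V, ⟨m, ⟨hm, hmn⟩, hV, hcard⟩, rfl⟩
    have hnV : n ∉ V := fun h => by have := hV.le_of_mem h; omega
    exact ⟨hV.insert hmn (by omega), by rw [card_insert_of_notMem hnV, hcard]⟩

lemma card_stepSets_zero_zero : #(stepSets 0 0) = 1 := by
  rw [stepSets_zero_zero, card_singleton]

lemma card_stepSets_add_three_succ :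
    #(stepSets (n + 3) (r + 1))
      = #(stepSets n r) + #(stepSets (n + 1) r) + #(stepSets (n + 2) r) := by
  rw [card_stepSets_succ, Nat.add_sub_cancel, sum_Ico_succ_top (by omega),
    sum_Ico_succ_top (by omega), Nat.Ico_succ_singleton, sum_singleton]

lemma card_stepSets_eq_zero_of_lt (h : 3 * r < n) : #(stepSets n r) = 0 := by
  induction r generalizing n with
  | zero =>
    obtain ⟨n, rfl⟩ : ∃ k, n = k + 1 := ⟨n - 1, by omega⟩
    rw [stepSets_succ_zero, card_empty]
  | succ r ih =>
    rw [card_stepSets_succ]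
    exact sum_eq_zero fun m hm => ih (by rw [mem_Ico] at hm; omega)

lemma card_stepSets_ne_zero (h₁ : r ≤ n) (h₂ : n ≤ 3 * r) : #(stepSets n r) ≠ 0 := by
  induction r generalizing n with
  | zero =>
    obtain rfl : n = 0 := by omega
    rw [card_stepSets_zero_zero]
    exact one_ne_zero
  | succ r ih =>
    rw [card_stepSets_succ]
    refine fun hsum => ih (n := min (n - 1) (3 * r)) (by omega) (by omega) ?_
    exact (sum_eq_zero_iff.1 hsum) _ (mem_Ico.2 ⟨by omega, by omega⟩)

lemma card_stepSets_three_mul (r : ℕ) : #(stepSets (3 * r) r) = 1 := by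
  induction r with
  | zero => exact card_stepSets_zero_zero
  | succ r ih =>
    rw [show 3 * (r + 1) = 3 * r + 3 by ring, card_stepSets_add_three_succ, ih,
      card_stepSets_eq_zero_of_lt (by omega), card_stepSets_eq_zero_of_lt (by omega)]

lemma card_stepSets_three_mul_add_two (r : ℕ) : #(stepSets (3 * r + 2) (r + 1)) = r + 1 := by
  induction r with
  | zero =>
    rw [card_stepSets_succ]
    simp [sum_range_succ, card_stepSets_zero_zero, stepSets_succ_zero]
  | succ r ih =>
    rw [show 3 * (r + 1) + 2 = (3 * r + 2) + 3 by ring, card_stepSets_add_three_succ, ih,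
      show 3 * r + 2 + 1 = 3 * (r + 1) by ring, card_stepSets_three_mul,
      card_stepSets_eq_zero_of_lt (by omega)]

lemma two_mul_card_stepSets_three_mul_add_one (r : ℕ) :
    2 * #(stepSets (3 * r + 1) (r + 1)) = (r + 1) * (r + 2) := by
  induction r with
  | zero =>
    rw [card_stepSets_succ]
    simp [card_stepSets_zero_zero]
  | succ r ih =>
    rw [show 3 * (r + 1) + 1 = (3 * r + 1) + 3 by ring, card_stepSets_add_three_succ,
      show 3 * r + 1 + 1 = 3 * r + 2 by ring, card_stepSets_three_mul_add_two,
      show 3 * r + 1 + 2 = 3 * (r + 1) by ring, card_stepSets_three_mul]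
    linarith

end Compositions

section Cycle

open SimpleGraph

variable {n : ℕ}

lemma isDomSet_cycleGraph_iff {D : Finset (Fin (n + 2))} :
    IsDomSet (cycleGraph (n + 2)) D ↔ ∀ v, v - 1 ∈ D ∨ v ∈ D ∨ v + 1 ∈ D := by
  refine forall_congr' fun v => ?_
  simp only [← mem_neighborSet, cycleGraph_neighborSet, Set.mem_insert_iff, Set.mem_singleton_iff]
  constructor
  · intro h
    by_cases hv : v ∈ D
    · exact Or.inr (Or.inl hv)
    · obtain ⟨u, hu, rfl | rfl⟩ := h hv <;> simp [hu]
  · rintro (h | h | h) hv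
    · exact ⟨_, h, Or.inr (sub_add_cancel v 1).symm⟩
    · exact absurd h hv
    · exact ⟨_, h, Or.inl (add_sub_cancel_right v 1).symm⟩

def cutOpen (D : Finset (Fin (n + 2))) : Finset ℕ :=
  insert (n + 2) (D.map Fin.valEmbedding)

lemma mem_cutOpen {D : Finset (Fin (n + 2))} {x : ℕ} :
    x ∈ cutOpen D ↔ x = n + 2 ∨ ∃ v ∈ D, (v : ℕ) = x := by
  simp [cutOpen]

lemma isStepSet_cutOpen_iff {D : Finset (Fin (n + 2))} (h0 : 0 ∈ D) :
    IsStepSet (n + 2) (cutOpen D) ↔ IsDomSet (cycleGraph (n + 2)) D := by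
  rw [isDomSet_cycleGraph_iff]
  have hsub : cutOpen D ⊆ range (n + 3) := fun x hx => by
    rcases mem_cutOpen.1 hx with rfl | ⟨v, -, rfl⟩ <;> simp only [mem_range] <;> omega
  constructor
  · rintro ⟨-, -, -, hwindow⟩ v
    by_cases hv0 : v = 0
    · exact Or.inr (Or.inl (hv0 ▸ h0))
    have hv : (v : ℕ) ≠ 0 := Fin.val_ne_zero_iff.2 hv0
    have hvsub : ((v - 1 : Fin (n + 2)) : ℕ) = v - 1 := Fin.val_sub_one_of_ne_zero hv0
    obtain ⟨w, hw, hlo, hhi⟩ := hwindow (v - 1) (by omega)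
    rcases mem_cutOpen.1 hw with rfl | ⟨x, hx, rfl⟩
    · have hlast : v + 1 = 0 := by
        ext
        rw [Fin.val_add, Fin.val_one, Fin.val_zero, show (v : ℕ) + 1 = n + 2 by omega,
          Nat.mod_self]
      exact Or.inr (Or.inr (hlast ▸ h0))
    · have hx' := x.isLt
      rcases (by omega : (x : ℕ) = v - 1 ∨ (x : ℕ) = v ∨ (x : ℕ) = v + 1) with h | h | h
      · exact Or.inl (by convert hx; ext; omega)
      · exact Or.inr (Or.inl (by convert hx; ext; omega))
      · exact Or.inr (Or.inr (by convert hx; ext; rw [Fin.val_add_one_of_lt' (by omega)]; omega))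
  · intro hdom
    refine ⟨hsub, mem_cutOpen.2 (Or.inr ⟨0, h0, rfl⟩), mem_insert_self _ _, fun u hu => ?_⟩
    have hv0 : (⟨u + 1, by omega⟩ : Fin (n + 2)) ≠ 0 := by simp [Fin.ext_iff]
    rcases hdom ⟨u + 1, by omega⟩ with h | h | h
    · exact ⟨u, mem_cutOpen.2 (Or.inr ⟨_, h, Fin.val_sub_one_of_ne_zero hv0⟩), le_rfl,
        by omega⟩
    · exact ⟨u + 1, mem_cutOpen.2 (Or.inr ⟨_, h, rfl⟩), by omega, by omega⟩
    · by_cases hun : u + 2 = n + 2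
      · exact ⟨n + 2, mem_insert_self _ _, by omega, by omega⟩
      · exact ⟨u + 2, mem_cutOpen.2 (Or.inr ⟨_, h, Fin.val_add_one_of_lt' (by simp; omega)⟩),
          by omega, le_rfl⟩

lemma notMem_map_valEmbedding (D : Finset (Fin (n + 2))) : n + 2 ∉ D.map Fin.valEmbedding := by
  simpa using fun x _ => x.isLt.ne

lemma card_cutOpen (D : Finset (Fin (n + 2))) : #(cutOpen D) = #D + 1 := by
  rw [cutOpen, card_insert_of_notMem (notMem_map_valEmbedding D), card_map]

lemma cutOpen_injective : Function.Injective (cutOpen (n := n)) := fun D D' h => by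
  have h' := congrArg (·.erase (n + 2)) h
  simp only [cutOpen, erase_insert (notMem_map_valEmbedding _)] at h'
  exact Finset.map_injective _ h'

lemma image_cutOpen (r : ℕ) :
    cutOpen '' {D | (IsDomSet (cycleGraph (n + 2)) D ∧ #D = r) ∧ 0 ∈ D}
      = stepSets (n + 2) r := by
  ext U
  simp only [Set.mem_image, Set.mem_ofPred_eq, mem_coe, mem_stepSets]
  constructor
  · rintro ⟨D, ⟨⟨hD, rfl⟩, h0⟩, rfl⟩
    exact ⟨(isStepSet_cutOpen_iff h0).2 hD, card_cutOpen D⟩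
  · rintro ⟨hU, hcard⟩
    classical
    set D : Finset (Fin (n + 2)) := {v | (v : ℕ) ∈ U}
    have hDU : cutOpen D = U := by
      ext x
      rw [mem_cutOpen]
      constructor
      · rintro (rfl | ⟨v, hv, rfl⟩)
        · exact hU.self_mem
        · exact (mem_filter.1 hv).2
      · intro hx
        by_cases hxn : x = n + 2
        · exact Or.inl hxn
        · have := hU.le_of_mem hx
          exact Or.inr ⟨⟨x, by omega⟩, by simp [D, hx], rfl⟩
    have h0 : (0 : Fin (n + 2)) ∈ D := by simp [D, hU.zero_mem]
    refine ⟨D, ⟨⟨(isStepSet_cutOpen_iff h0).1 (hDU ▸ hU), ?_⟩, h0⟩, hDU⟩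
    have := card_cutOpen D
    rw [hDU, hcard] at this
    omega

lemma DV_cycleGraph_zero :
    DV (cycleGraph (n + 2)) 0
      = #(stepSets (n + 2) (domNum (cycleGraph (n + 2)))) := by
  rw [DV, ← Set.ncard_coe_finset, ← image_cutOpen,
    Set.ncard_image_of_injective _ cutOpen_injective]
  rfl

lemma domNum_cycleGraph : domNum (cycleGraph (n + 2)) = (n + 4) / 3 := by
  obtain ⟨D, hD, hcard⟩ := exists_isDomSet_card_eq_domNum (G := cycleGraph (n + 2))
  have hdeg : (cycleGraph (n + 2)).maxDegree ≤ 2 :=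
    maxDegree_le_of_forall_degree_le _ _ fun v => by
      rw [cycleGraph_degree_two_le]
      exact card_le_two
  have hlower := hD.card_le
  rw [Fintype.card_fin, hcard] at hlower
  have := Nat.mul_le_mul_right (domNum (cycleGraph (n + 2)))
    (show (cycleGraph (n + 2)).maxDegree + 1 ≤ 3 by omega)
  obtain ⟨U, hU⟩ := card_pos.1 (Nat.pos_of_ne_zero
    (card_stepSets_ne_zero (n := n + 2) (r := (n + 4) / 3) (by omega) (by omega)))
  rw [← mem_coe, ← image_cutOpen] at hU
  obtain ⟨E, ⟨⟨hE, hEcard⟩, -⟩, -⟩ := hU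
  have := domNum_le hE
  omega

lemma mul_card_stepSets_eq_mul_tau_cycleGraph :
    (n + 2) * #(stepSets (n + 2) ((n + 4) / 3))
      = (n + 4) / 3 * tau (cycleGraph (n + 2)) := by
  have := card_mul_DV_eq_domNum_mul_tau (G := cycleGraph (n + 2)) 0 fun w =>
    ⟨⟨Equiv.addRight w, by simp [cycleGraph_adj]⟩, zero_add w⟩
  rwa [Fintype.card_fin, DV_cycleGraph_zero, domNum_cycleGraph] at this

end Cycle

theorem stmt_13 (n : ℕ) (hn : 3 ≤ n) :
    (n % 3 = 0 → tau (SimpleGraph.cycleGraph n) = 3) ∧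
    (n % 3 = 1 → tau (SimpleGraph.cycleGraph n) = n * (2 + n / 3) / 2) ∧
    (n % 3 = 2 → tau (SimpleGraph.cycleGraph n) = n) := by
  obtain ⟨m, rfl⟩ : ∃ m, n = m + 2 := ⟨n - 2, by omega⟩
  have key := mul_card_stepSets_eq_mul_tau_cycleGraph (n := m)
  refine ⟨fun h => ?_, fun h => ?_, fun h => ?_⟩
  · obtain ⟨k, hk, hγ⟩ : ∃ k, m + 2 = 3 * k ∧ (m + 4) / 3 = k :=
      ⟨(m + 4) / 3, by omega, rfl⟩
    rw [hγ, hk, card_stepSets_three_mul] at key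
    rw [hk]
    exact Nat.eq_of_mul_eq_mul_left (show 0 < k by omega) (by linarith)
  · obtain ⟨k, hk, hγ⟩ : ∃ k, m + 2 = 3 * k + 1 ∧ (m + 4) / 3 = k + 1 :=
      ⟨(m + 2) / 3, by omega, by omega⟩
    have hcount := two_mul_card_stepSets_three_mul_add_one k
    rw [hγ, hk] at key
    rw [hk, show (3 * k + 1) / 3 = k by omega]
    refine (Nat.div_eq_of_eq_mul_left two_pos ?_).symm
    refine Nat.eq_of_mul_eq_mul_left (show 0 < k + 1 by omega) ?_
    linear_combination 2 * key - (3 * k + 1) * hcount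
  · obtain ⟨k, hk, hγ⟩ : ∃ k, m + 2 = 3 * k + 2 ∧ (m + 4) / 3 = k + 1 :=
      ⟨(m + 2) / 3, by omega, by omega⟩
    rw [hγ, hk, card_stepSets_three_mul_add_two] at key
    rw [hk]
    exact Nat.eq_of_mul_eq_mul_left (show 0 < k + 1 by omega) (by linarith)
end

section
/- For the path P_n with n ≥ 2: τ(P_n) = 1 if n ≡ 0 (mod 3); τ(P_n) = n + ⌊n/3⌋(⌊n/3⌋ − 1)/2 if n ≡ 1 (mod 3); and τ(P_n) = 2 + ⌊n/3⌋ if n ≡ 2 (mod 3). -/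
/-!
List a dominating set of the path `0 - 1 - ⋯ - (n-1)` increasingly as `e 0 < ⋯ < e (k-1)`.
Domination forces `e 0 ≤ 1`, `e (i+1) ≤ e i + 3` and `n ≤ e (k-1) + 2`, hence `n ≤ 3k` and
`γ(Pₙ) = ⌈n/3⌉`. At this minimum size the same inequalities squeeze `e i` into `{3i-1, 3i, 3i+1}`,
with the left shift nondecreasing in `i`, so a minimum dominating set is determined by the two
indices `p ≤ q` at which the shift grows. Which pairs `(p, q)` occur depends only on `n mod 3`,
and counting them gives `τ(Pₙ)`.
-/

open Finset SimpleGraph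

theorem domNum_eq_of_isDomSet {V : Type*} {G : SimpleGraph V} {k : ℕ}
    (hex : ∃ D, IsDomSet G D ∧ #D = k) (hle : ∀ D, IsDomSet G D → k ≤ #D) : domNum G = k := by
  obtain ⟨D, hD, rfl⟩ := hex
  unfold domNum
  refine le_antisymm (Nat.sInf_le ⟨D, hD, rfl⟩) ?_
  obtain ⟨D', hD', hcard⟩ := Nat.sInf_mem (s := {n | ∃ D, IsDomSet G D ∧ #D = n}) ⟨_, D, hD, rfl⟩
  exact hcard ▸ hle D' hD'

section GapSequence

variable {e : ℕ → ℕ} {k : ℕ}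

theorem le_add_three_mul_of_gap (hgap : ∀ i, i + 1 < k → e (i + 1) ≤ e i + 3) {i j : ℕ}
    (hij : i ≤ j) (hj : j < k) : e j ≤ e i + 3 * (j - i) := by
  induction j, hij using Nat.le_induction with
  | base => simp
  | succ j hij ih =>
    have := hgap j hj
    have := ih (by omega)
    omega

theorem exists_near_of_gap (h0 : e 0 ≤ 1) (hgap : ∀ i, i + 1 < k → e (i + 1) ≤ e i + 3)
    (hk : 0 < k) {v : ℕ} (hv : v ≤ e (k - 1) + 1) : ∃ i < k, e i ≤ v + 1 ∧ v ≤ e i + 1 := by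
  induction k, hk using Nat.le_induction with
  | base => exact ⟨0, one_pos, by omega, hv⟩
  | succ k hk ih =>
    by_cases hvk : v ≤ e (k - 1) + 1
    · obtain ⟨i, hi, hnear⟩ := ih (fun i hi => hgap i (by omega)) hvk
      exact ⟨i, by omega, hnear⟩
    · have := hgap (k - 1) (by omega)
      rw [Nat.sub_add_cancel hk] at this
      exact ⟨k, k.lt_succ_self, by omega, hv⟩

theorem exists_threshold_of_upwardClosed {P : ℕ → Prop}
    (hP : ∀ i j, i ≤ j → j < k → P i → P j) : ∃ p ≤ k, ∀ i < k, p ≤ i ↔ P i := by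
  induction k with
  | zero => exact ⟨0, le_rfl, by simp⟩
  | succ k ih =>
    by_cases hk : P k
    · obtain ⟨p, hp, h⟩ := ih fun i j hij hj => hP i j hij (by omega)
      refine ⟨p, by omega, fun i hi => ?_⟩
      rcases Nat.lt_succ_iff_lt_or_eq.1 hi with hi | rfl
      · exact h i hi
      · exact ⟨fun _ => hk, fun _ => hp⟩
    · exact ⟨k + 1, le_rfl, fun i hi =>
        ⟨fun h => by omega, fun h => absurd (hP i k (by omega) (by omega) h) hk⟩⟩

end GapSequence

/- The minimum dominating sets of the path turn out to be the sets `{shiftSeq p q i | i < k}`: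
the pattern `1, 4, 7, …` moved one step left from index `p` on and one more from index `q` on. -/
def shiftSeq (p q i : ℕ) : ℕ := 3 * i + 1 - (if p ≤ i then 1 else 0) - (if q ≤ i then 1 else 0)

def shiftSet (p q k : ℕ) : Finset ℕ := (range k).image (shiftSeq p q)

section ShiftSeq

variable {p q k : ℕ}

theorem shiftSeq_zero_le (p q : ℕ) : shiftSeq p q 0 ≤ 1 := by
  unfold shiftSeq; split_ifs <;> omega

theorem shiftSeq_succ_le (p q i : ℕ) : shiftSeq p q (i + 1) ≤ shiftSeq p q i + 3 := by
  unfold shiftSeq; split_ifs <;> omega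

theorem strictMono_shiftSeq (p q : ℕ) : StrictMono (shiftSeq p q) :=
  strictMono_nat_of_lt_succ fun i => by unfold shiftSeq; split_ifs <;> omega

theorem exists_eq_shiftSeq {e : ℕ → ℕ} (hk : 0 < k) (h0 : e 0 ≤ 1)
    (hgap : ∀ i, i + 1 < k → e (i + 1) ≤ e i + 3) (hlast : 3 * k ≤ e (k - 1) + 4) :
    ∃ p q, p ≤ q ∧ q ≤ k ∧ 1 ≤ q ∧ ∀ i < k, e i = shiftSeq p q i := by
  have hup : ∀ i < k, e i ≤ 3 * i + 1 := fun i hi => by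
    have := le_add_three_mul_of_gap hgap (Nat.zero_le i) hi
    omega
  have hlow : ∀ i < k, 3 * i ≤ e i + 1 := fun i hi => by
    have := le_add_three_mul_of_gap hgap (show i ≤ k - 1 by omega) (by omega)
    omega
  obtain ⟨p, hpk, hp⟩ := exists_threshold_of_upwardClosed (k := k) (P := fun i => e i ≤ 3 * i)
    fun i j hij hj h => by have := le_add_three_mul_of_gap hgap hij hj; omega
  obtain ⟨q, hqk, hq⟩ := exists_threshold_of_upwardClosed (k := k) (P := fun i => e i + 1 ≤ 3 * i)
    fun i j hij hj h => by have := le_add_three_mul_of_gap hgap hij hj; omega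
  refine ⟨p, q, ?_, hqk, ?_, fun i hi => ?_⟩
  · by_contra! hqp
    have := (hq q (by omega)).1 le_rfl
    have := (hp q (by omega)).2 (by omega)
    omega
  · by_contra! hq0
    have := (hq 0 hk).1 (by omega)
    omega
  · have := hp i hi
    have := hq i hi
    have := hup i hi
    have := hlow i hi
    unfold shiftSeq
    split_ifs <;> omega

theorem card_shiftSet (p q k : ℕ) : #(shiftSet p q k) = k := by
  rw [shiftSet, card_image_of_injective _ (strictMono_shiftSeq p q).injective, card_range]

theorem card_filter_shiftSet (P : ℕ → Prop) [DecidablePred P] :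
    #{x ∈ shiftSet p q k | P x} = #{i ∈ range k | P (shiftSeq p q i)} := by
  rw [shiftSet, filter_image, card_image_of_injective _ (strictMono_shiftSeq p q).injective]

-- `p` and `q` are read off the residues mod 3: indices before `p` give residue `1`, indices
-- from `q` on give residue `2`.
theorem card_filter_shiftSet_mod_three_eq_one (hpq : p ≤ q) (hqk : q ≤ k) :
    #{x ∈ shiftSet p q k | x % 3 = 1} = p := by
  rw [card_filter_shiftSet]
  convert card_range p using 2
  ext i
  simp only [mem_filter, mem_range]
  unfold shiftSeq
  split_ifs <;> omega

theorem card_filter_shiftSet_mod_three_ne_two (hpq : p ≤ q) (hqk : q ≤ k) (hq : 1 ≤ q) :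
    #{x ∈ shiftSet p q k | x % 3 ≠ 2} = q := by
  rw [card_filter_shiftSet]
  convert card_range q using 2
  ext i
  simp only [mem_filter, mem_range]
  unfold shiftSeq
  split_ifs <;> omega

theorem shiftSet_injective {p' q' : ℕ} (hpq : p ≤ q) (hqk : q ≤ k) (hq : 1 ≤ q)
    (hpq' : p' ≤ q') (hqk' : q' ≤ k) (hq' : 1 ≤ q') (h : shiftSet p q k = shiftSet p' q' k) :
    p = p' ∧ q = q' := by
  have hp := card_filter_shiftSet_mod_three_eq_one hpq hqk
  have hq := card_filter_shiftSet_mod_three_ne_two hpq hqk hq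
  rw [h] at hp hq
  exact ⟨hp.symm.trans (card_filter_shiftSet_mod_three_eq_one hpq' hqk'),
    hq.symm.trans (card_filter_shiftSet_mod_three_ne_two hpq' hqk' hq')⟩

end ShiftSeq

section NthFinset

variable (S : Finset ℕ)

theorem strictMonoOn_nth_finset : StrictMonoOn (Nat.nth (· ∈ S)) (Set.Iio #S) := by
  simpa using Nat.nth_strictMonoOn (p := (· ∈ S)) S.finite_toSet

theorem exists_nth_eq_of_mem_finset {x : ℕ} (hx : x ∈ S) : ∃ i < #S, Nat.nth (· ∈ S) i = x := by
  simpa using Nat.exists_lt_card_finite_nth_eq (p := (· ∈ S)) S.finite_toSet hx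

theorem nth_mem_finset {i : ℕ} (hi : i < #S) : Nat.nth (· ∈ S) i ∈ S :=
  Nat.nth_mem_of_lt_card (p := (· ∈ S)) S.finite_toSet (by simpa using hi)

theorem image_nth_range_card : (range #S).image (Nat.nth (· ∈ S)) = S := by
  ext x
  simp only [mem_image, mem_range]
  constructor
  · rintro ⟨i, hi, rfl⟩
    exact nth_mem_finset S hi
  · exact exists_nth_eq_of_mem_finset S

end NthFinset

-- `IsDomSet (pathGraph n)` transported to finsets of `ℕ`, where the arithmetic is easier.
def DominatesRange (n : ℕ) (S : Finset ℕ) : Prop :=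
  S ⊆ range n ∧ ∀ v < n, ∃ u ∈ S, u ≤ v + 1 ∧ v ≤ u + 1

namespace DominatesRange

variable {n : ℕ} {S : Finset ℕ}

theorem card_pos (hS : DominatesRange n S) (hn : 0 < n) : 0 < #S := by
  obtain ⟨u, hu, -⟩ := hS.2 0 hn
  exact Finset.card_pos.2 ⟨u, hu⟩

theorem nth_zero_le_one (hS : DominatesRange n S) (hn : 0 < n) : Nat.nth (· ∈ S) 0 ≤ 1 := by
  obtain ⟨u, hu, hu0, -⟩ := hS.2 0 hn
  obtain ⟨j, hj, rfl⟩ := exists_nth_eq_of_mem_finset S hu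
  have := (strictMonoOn_nth_finset S).monotoneOn (hS.card_pos hn) hj (Nat.zero_le j)
  omega

theorem nth_succ_le (hS : DominatesRange n S) {i : ℕ} (hi : i + 1 < #S) :
    Nat.nth (· ∈ S) (i + 1) ≤ Nat.nth (· ∈ S) i + 3 := by
  have hmono := strictMonoOn_nth_finset S
  have hlt := mem_range.1 (hS.1 (nth_mem_finset S hi))
  have hlt' := hmono (show i < #S by omega) hi i.lt_succ_self
  by_contra! hgap
  obtain ⟨u, hu, hu1, hu2⟩ := hS.2 (Nat.nth (· ∈ S) i + 2) (by omega)
  obtain ⟨j, hj, rfl⟩ := exists_nth_eq_of_mem_finset S hu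
  have hij : i < j := (hmono.lt_iff_lt (show i < #S by omega) hj).1 (by omega)
  have := hmono.monotoneOn hi hj hij
  omega

theorem le_nth_last_add_two (hS : DominatesRange n S) (hn : 0 < n) :
    n ≤ Nat.nth (· ∈ S) (#S - 1) + 2 := by
  obtain ⟨u, hu, -, hu2⟩ := hS.2 (n - 1) (by omega)
  obtain ⟨j, hj, rfl⟩ := exists_nth_eq_of_mem_finset S hu
  have := (strictMonoOn_nth_finset S).monotoneOn hj (show #S - 1 < #S by omega) (by omega)
  omega

theorem le_three_mul_card (hS : DominatesRange n S) : n ≤ 3 * #S := by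
  rcases Nat.eq_zero_or_pos n with rfl | hn
  · exact Nat.zero_le _
  have hk := hS.card_pos hn
  have := le_add_three_mul_of_gap (fun i => hS.nth_succ_le) (Nat.zero_le (#S - 1)) (by omega)
  have := hS.nth_zero_le_one hn
  have := hS.le_nth_last_add_two hn
  omega

theorem exists_eq_shiftSet (hS : DominatesRange n S) (hn : 0 < n) (hcard : 3 * #S ≤ n + 2) :
    ∃ p q, p ≤ q ∧ q ≤ #S ∧ 1 ≤ q ∧ S = shiftSet p q #S := by
  have := hS.le_nth_last_add_two hn
  obtain ⟨p, q, hpq, hqk, hq, heq⟩ := exists_eq_shiftSeq (hS.card_pos hn) (hS.nth_zero_le_one hn)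
    (fun i => hS.nth_succ_le) (by omega)
  refine ⟨p, q, hpq, hqk, hq, ?_⟩
  exact (image_nth_range_card S).symm.trans (image_congr fun i hi => heq i (mem_range.1 hi))

end DominatesRange

theorem dominatesRange_shiftSet_iff {n p q k : ℕ} (hk : 0 < k) :
    DominatesRange n (shiftSet p q k) ↔
      shiftSeq p q (k - 1) < n ∧ n ≤ shiftSeq p q (k - 1) + 2 := by
  have hmono := (strictMono_shiftSeq p q).monotone
  constructor
  · rintro ⟨hsub, hdom⟩
    have hlast : shiftSeq p q (k - 1) < n :=
      mem_range.1 (hsub (mem_image_of_mem _ (mem_range.2 (by omega))))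
    obtain ⟨u, hu, -, hu2⟩ := hdom (n - 1) (by omega)
    obtain ⟨i, hi, rfl⟩ := mem_image.1 hu
    have := hmono (Nat.le_sub_one_of_lt (mem_range.1 hi))
    exact ⟨hlast, by omega⟩
  · rintro ⟨hlast, hlast'⟩
    refine ⟨fun x hx => ?_, fun v hv => ?_⟩
    · obtain ⟨i, hi, rfl⟩ := mem_image.1 hx
      have := hmono (Nat.le_sub_one_of_lt (mem_range.1 hi))
      exact mem_range.2 (by omega)
    · obtain ⟨i, hi, hnear⟩ := exists_near_of_gap (shiftSeq_zero_le p q)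
        (fun i _ => shiftSeq_succ_le p q i) hk (show v ≤ shiftSeq p q (k - 1) + 1 by omega)
      exact ⟨_, mem_image_of_mem _ (mem_range.2 hi), hnear⟩

section PathGraph

variable {n : ℕ}

theorem isDomSet_pathGraph_iff (D : Finset (Fin n)) :
    IsDomSet (pathGraph n) D ↔ DominatesRange n (D.map Fin.valEmbedding) := by
  have hsub : D.map Fin.valEmbedding ⊆ range n := fun x hx => by
    obtain ⟨v, -, rfl⟩ := mem_map.1 hx
    exact mem_range.2 v.isLt
  simp only [IsDomSet, DominatesRange, hsub, true_and, mem_map, Fin.valEmbedding_apply,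
    pathGraph_adj]
  constructor
  · intro h v hv
    by_cases hvD : ⟨v, hv⟩ ∈ D
    · exact ⟨v, ⟨_, hvD, rfl⟩, by omega, by omega⟩
    · obtain ⟨u, hu, hadj⟩ := h _ hvD
      simp only at hadj
      exact ⟨u, ⟨u, hu, rfl⟩, by omega, by omega⟩
  · intro h v hvD
    obtain ⟨-, ⟨u, hu, rfl⟩, hu1, hu2⟩ := h v v.isLt
    have hne : u.val ≠ v.val := fun huv => hvD (Fin.ext huv ▸ hu)
    exact ⟨u, hu, by omega⟩

theorem exists_isDomSet_pathGraph_map_eq {S : Finset ℕ} (hS : DominatesRange n S) :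
    ∃ D : Finset (Fin n), IsDomSet (pathGraph n) D ∧ D.map Fin.valEmbedding = S := by
  have hlt : ∀ m ∈ S, m < n := fun m hm => mem_range.1 (hS.1 hm)
  refine ⟨S.attachFin hlt, ?_, map_valEmbedding_attachFin hlt⟩
  rwa [isDomSet_pathGraph_iff, map_valEmbedding_attachFin]

theorem domNum_pathGraph (hn : 0 < n) : domNum (pathGraph n) = (n + 2) / 3 := by
  have hk : 0 < (n + 2) / 3 := by omega
  apply domNum_eq_of_isDomSet
  · obtain ⟨p, hp⟩ : ∃ p, shiftSeq p ((n + 2) / 3) ((n + 2) / 3 - 1) < n ∧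
        n ≤ shiftSeq p ((n + 2) / 3) ((n + 2) / 3 - 1) + 2 :=
      if h : n % 3 = 1 then ⟨(n + 2) / 3 - 1, by unfold shiftSeq; split_ifs <;> omega⟩
      else ⟨(n + 2) / 3, by unfold shiftSeq; split_ifs <;> omega⟩
    obtain ⟨D, hD, hDS⟩ :=
      exists_isDomSet_pathGraph_map_eq ((dominatesRange_shiftSet_iff hk).2 hp)
    exact ⟨D, hD, by rw [← card_map Fin.valEmbedding, hDS, card_shiftSet]⟩
  · intro D hD
    have := ((isDomSet_pathGraph_iff D).1 hD).le_three_mul_card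
    rw [card_map] at this
    omega

theorem tau_pathGraph (hn : 0 < n) :
    tau (pathGraph n) = {S : Finset ℕ | DominatesRange n S ∧ #S = (n + 2) / 3}.ncard := by
  rw [tau, minDomSets, domNum_pathGraph hn,
    ← Set.ncard_image_of_injective _ (Finset.map_injective Fin.valEmbedding)]
  congr 1
  ext S
  constructor
  · rintro ⟨D, ⟨hD, hcard⟩, rfl⟩
    exact ⟨(isDomSet_pathGraph_iff D).1 hD, by rwa [card_map]⟩
  · rintro ⟨hS, hcard⟩
    obtain ⟨D, hD, rfl⟩ := exists_isDomSet_pathGraph_map_eq hS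
    exact ⟨D, ⟨hD, by rwa [card_map] at hcard⟩, rfl⟩

end PathGraph

def shiftIndices (n k : ℕ) : Finset (ℕ × ℕ) :=
  {x ∈ range (k + 1) ×ˢ range (k + 1) | x.1 ≤ x.2 ∧ 1 ≤ x.2 ∧
    shiftSeq x.1 x.2 (k - 1) < n ∧ n ≤ shiftSeq x.1 x.2 (k - 1) + 2}

theorem tau_pathGraph_eq_card_shiftIndices {n : ℕ} (hn : 0 < n) :
    tau (pathGraph n) = #(shiftIndices n ((n + 2) / 3)) := by
  set k := (n + 2) / 3
  have hk : 0 < k := by omega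
  have hset : {S : Finset ℕ | DominatesRange n S ∧ #S = k} =
      ↑((shiftIndices n k).image fun x => shiftSet x.1 x.2 k) := by
    ext S
    simp only [Set.mem_ofPred_eq, coe_image, Set.mem_image, mem_coe, shiftIndices, mem_filter,
      mem_product, mem_range, Prod.exists]
    constructor
    · rintro ⟨hS, hcard⟩
      obtain ⟨p, q, hpq, hqk, hq, hSpq⟩ := hS.exists_eq_shiftSet hn (by omega)
      rw [hcard] at hqk hSpq
      subst hSpq
      exact ⟨p, q, ⟨⟨by omega, by omega⟩, hpq, hq, (dominatesRange_shiftSet_iff hk).1 hS⟩, rfl⟩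
    · rintro ⟨p, q, ⟨-, -, -, hdom⟩, rfl⟩
      exact ⟨(dominatesRange_shiftSet_iff hk).2 hdom, card_shiftSet p q k⟩
  rw [tau_pathGraph hn, hset, Set.ncard_coe_finset]
  refine card_image_of_injOn fun x hx y hy hxy => ?_
  simp only [shiftIndices, coe_filter, mem_product, mem_range, Set.mem_ofPred_eq] at hx hy
  obtain ⟨⟨-, hqk⟩, hpq, hq, -⟩ := hx
  obtain ⟨⟨-, hqk'⟩, hpq', hq', -⟩ := hy
  exact Prod.ext_iff.2 (shiftSet_injective hpq (by omega) hq hpq' (by omega) hq' hxy)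

theorem card_filter_le_range_product (k : ℕ) :
    #{x ∈ range (k + 1) ×ˢ range (k + 1) | x.1 ≤ x.2} = (k + 2).choose 2 := by
  rw [← card_range (k + 2), ← card_product_filter_lt]
  refine card_nbij' (fun x => (x.1, x.2 + 1)) (fun x => (x.1, x.2 - 1)) ?_ ?_ ?_ ?_ <;>
    · intro x hx
      simp only [coe_filter, mem_product, mem_range, Set.mem_ofPred_eq, Prod.ext_iff, true_and]
        at hx ⊢
      omega

section Count

variable {n : ℕ}

theorem card_shiftIndices_of_mod_three_eq_zero (h : n % 3 = 0) (hn : 0 < n) :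
    #(shiftIndices n ((n + 2) / 3)) = 1 := by
  obtain ⟨k, rfl⟩ : ∃ k, n = 3 * k := ⟨n / 3, by omega⟩
  rw [show (3 * k + 2) / 3 = k by omega, card_eq_one]
  refine ⟨(k, k), ?_⟩
  ext x
  rw [shiftIndices, mem_filter]
  simp only [shiftSeq, mem_product, mem_range, mem_singleton, Prod.ext_iff]
  split_ifs <;> omega

theorem card_shiftIndices_of_mod_three_eq_two (h : n % 3 = 2) :
    #(shiftIndices n ((n + 2) / 3)) = 2 + n / 3 := by
  obtain ⟨m, rfl⟩ : ∃ m, n = 3 * m + 2 := ⟨n / 3, by omega⟩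
  rw [show (3 * m + 2 + 2) / 3 = m + 1 by omega, show (3 * m + 2) / 3 = m by omega]
  have : shiftIndices (3 * m + 2) (m + 1) = range (m + 2) ×ˢ {m + 1} := by
    ext x
    rw [shiftIndices, mem_filter]
    simp only [shiftSeq, mem_product, mem_range, mem_singleton]
    split_ifs <;> omega
  rw [this, card_product, card_range, card_singleton]
  omega

theorem card_shiftIndices_of_mod_three_eq_one (h : n % 3 = 1) :
    #(shiftIndices n ((n + 2) / 3)) = n + n / 3 * (n / 3 - 1) / 2 := by
  obtain ⟨m, rfl⟩ : ∃ m, n = 3 * m + 1 := ⟨n / 3, by omega⟩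
  rw [show (3 * m + 1 + 2) / 3 = m + 1 by omega, show (3 * m + 1) / 3 = m by omega]
  have hsub : {(m + 1, m + 1), (0, 0)} ⊆ {x ∈ range (m + 2) ×ˢ range (m + 2) | x.1 ≤ x.2} := by
    intro x hx
    simp only [mem_insert, mem_singleton, mem_filter, mem_product, mem_range] at hx ⊢
    rcases hx with rfl | rfl <;> simp
  have : shiftIndices (3 * m + 1) (m + 1) =
      {x ∈ range (m + 2) ×ˢ range (m + 2) | x.1 ≤ x.2} \ {(m + 1, m + 1), (0, 0)} := by
    ext x
    rw [shiftIndices, mem_sdiff, mem_filter, mem_filter]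
    simp only [shiftSeq, mem_product, mem_range, mem_insert, mem_singleton, Prod.ext_iff]
    split_ifs <;> omega
  rw [this, card_sdiff_of_subset hsub, card_filter_le_range_product, card_pair (by simp),
    Nat.choose_two_right]
  have : (m + 1 + 2) * (m + 1 + 2 - 1) = m * (m - 1) + 2 * (3 * m + 3) := by
    rcases m with _ | m
    · rfl
    · simp only [Nat.add_one_sub_one, add_tsub_cancel_right]
      ring
  omega

end Count

theorem stmt_15 (n : ℕ) (hn : 2 ≤ n) :
    (n % 3 = 0 → tau (SimpleGraph.pathGraph n) = 1) ∧
    (n % 3 = 1 → tau (SimpleGraph.pathGraph n) = n + (n / 3) * (n / 3 - 1) / 2) ∧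
    (n % 3 = 2 → tau (SimpleGraph.pathGraph n) = 2 + n / 3) := by
  rw [tau_pathGraph_eq_card_shiftIndices (by omega)]
  exact ⟨(card_shiftIndices_of_mod_three_eq_zero · (by omega)),
    card_shiftIndices_of_mod_three_eq_one, card_shiftIndices_of_mod_three_eq_two⟩
end

section
/- Let P_{3k+2} (k ≥ 0) have vertices labeled 1,…,3k+2 along the path, and write v = 3q + r with 0 ≤ r < 3. Then DV(v) = 0 if r = 0; DV(v) = 1 + q if r = 1; and DV(v) = k + 1 − q if r = 2. In particular τ(P_{3k+2}) = k + 2. -/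
open Finset SimpleGraph

theorem exists_threshold_of_forall_succ {p : ℕ → Prop} {n : ℕ} (hp : ∀ t < n, p t → p (t + 1)) :
    ∃ j ≤ n + 1, ∀ t ≤ n, (p t ↔ j ≤ t) := by
  classical
  by_cases h : ∃ t ≤ n, p t
  · refine ⟨Nat.find h, (Nat.find_spec h).1.trans n.le_succ, fun t ht => ⟨fun hpt =>
      Nat.find_min' h ⟨ht, hpt⟩, fun hjt => ?_⟩⟩
    induction t, hjt using Nat.le_induction with
    | base => exact (Nat.find_spec h).2
    | succ s _ ih => exact hp s (by omega) (ih (by omega))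
  · push Not at h
    exact ⟨n + 1, le_rfl, fun t ht => ⟨fun hpt => (h t ht hpt).elim, fun _ => by omega⟩⟩

theorem IsDomSet.exists_mem_near_of_pathGraph {n : ℕ} {D : Finset (Fin n)}
    (hD : IsDomSet (pathGraph n) D) {m : ℕ} (hm : m < n) :
    ∃ d ∈ D, m ≤ d.val + 1 ∧ d.val ≤ m + 1 := by
  by_cases h : (⟨m, hm⟩ : Fin n) ∈ D
  · exact ⟨_, h, by simp, by simp⟩
  · obtain ⟨u, hu, hadj⟩ := hD _ h
    rw [pathGraph_adj] at hadj
    exact ⟨u, hu, by simp only at hadj; omega⟩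

namespace PathDomination

variable {k : ℕ}

/-- With `0 ≤ j ≤ k+1`, these are the minimum dominating sets of `P_{3k+2}`: from the block
`{3t, 3t+1, 3t+2}` they take `3t+1` for `t < j` and `3t` for `j ≤ t`. -/
def shiftDomSet (k j : ℕ) : Finset (Fin (3 * k + 2)) :=
  {i | i.val % 3 = 1 ∧ i.val / 3 < j ∨ i.val % 3 = 0 ∧ j ≤ i.val / 3}

theorem mem_shiftDomSet {j : ℕ} {i : Fin (3 * k + 2)} :
    i ∈ shiftDomSet k j ↔ i.val % 3 = 1 ∧ i.val / 3 < j ∨ i.val % 3 = 0 ∧ j ≤ i.val / 3 := by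
  simp [shiftDomSet]

theorem isDomSet_shiftDomSet (j : ℕ) : IsDomSet (pathGraph (3 * k + 2)) (shiftDomSet k j) := by
  intro v hv
  rw [mem_shiftDomSet] at hv
  have hv' := v.isLt
  by_cases hright : v.val % 3 = 0 ∨ v.val % 3 = 2 ∧ j ≤ v.val / 3
  · refine ⟨⟨v.val + 1, by omega⟩, ?_, by simp [pathGraph_adj]⟩
    rw [mem_shiftDomSet]
    simp only
    omega
  · refine ⟨⟨v.val - 1, by omega⟩, ?_, ?_⟩
    · rw [mem_shiftDomSet]
      simp only
      omega
    · simp only [pathGraph_adj]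
      omega

variable {D : Finset (Fin (3 * k + 2))}

theorem exists_mem_div_three_eq (hD : IsDomSet (pathGraph (3 * k + 2)) D) {t : ℕ} (ht : t ≤ k) :
    ∃ d ∈ D, d.val / 3 = t := by
  obtain ⟨d, hd, h1, h2⟩ := hD.exists_mem_near_of_pathGraph (m := 3 * t + 1) (by omega)
  exact ⟨d, hd, by omega⟩

theorem surjOn_div_three (hD : IsDomSet (pathGraph (3 * k + 2)) D) :
    Set.SurjOn (fun d : Fin (3 * k + 2) => d.val / 3) D (range (k + 1)) := fun t ht => by
  simpa using exists_mem_div_three_eq hD (Nat.lt_succ_iff.mp (mem_range.mp ht))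

theorem succ_le_card_of_isDomSet (hD : IsDomSet (pathGraph (3 * k + 2)) D) : k + 1 ≤ #D := by
  simpa using card_le_card_of_surjOn _ (surjOn_div_three hD)

theorem card_shiftDomSet (j : ℕ) : #(shiftDomSet k j) = k + 1 := by
  refine le_antisymm ?_ (succ_le_card_of_isDomSet (isDomSet_shiftDomSet j))
  refine (card_le_card_of_injOn (fun d : Fin (3 * k + 2) => d.val / 3) (t := range (k + 1))
    (fun d _ => ?_) fun a ha b hb hab => ?_).trans (card_range _).le
  · have := d.isLt
    simp only [coe_range, Set.mem_Iio]
    omega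
  · simp only [mem_coe, mem_shiftDomSet] at ha hb hab
    exact Fin.ext (by omega)

theorem domNum_pathGraph : domNum (pathGraph (3 * k + 2)) = k + 1 :=
  IsLeast.csInf_eq ⟨⟨shiftDomSet k 0, isDomSet_shiftDomSet 0, card_shiftDomSet 0⟩,
    by rintro _ ⟨D, hD, rfl⟩; exact succ_le_card_of_isDomSet hD⟩

section Minimum

variable (hD : IsDomSet (pathGraph (3 * k + 2)) D) (hcard : #D ≤ k + 1)
include hD hcard

theorem val_eq_of_div_three_eq {d e : Fin (3 * k + 2)} (hd : d ∈ D) (he : e ∈ D)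
    (h : d.val / 3 = e.val / 3) : d.val = e.val :=
  congrArg Fin.val <| injOn_of_surjOn_of_card_le _
    (fun d _ => mem_coe.mpr (mem_range.mpr (by have := d.isLt; omega)))
    (surjOn_div_three hD) (by simpa using hcard) hd he h

theorem val_mod_three_ne_two : ∀ d ∈ D, d.val % 3 ≠ 2 := by
  suffices h : ∀ t, ∀ d ∈ D, d.val ≠ 3 * t + 2 from
    fun d hd hd2 => h (d.val / 3) d hd (by omega)
  intro t
  induction t using Nat.strong_induction_on with
  | _ t ih =>
    intro d hd hdt
    -- the vertex dominating `3t` lies in block `t`, where `d` already is, unless it is `3t - 1`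
    obtain ⟨e, he, h1, h2⟩ := hD.exists_mem_near_of_pathGraph (m := 3 * t) (by omega)
    by_cases hprev : e.val + 1 = 3 * t
    · exact ih (t - 1) (by omega) e he (by omega)
    · have := val_eq_of_div_three_eq hD hcard he hd (by omega)
      omega

theorem exists_mem_eq_three_mul_succ {t : ℕ} (ht : t < k) (h : ∃ d ∈ D, d.val = 3 * t) :
    ∃ d ∈ D, d.val = 3 * (t + 1) := by
  obtain ⟨d, hd, hdt⟩ := h
  obtain ⟨e, he, het⟩ := exists_mem_div_three_eq hD (show t + 1 ≤ k by omega)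
  have he2 := val_mod_three_ne_two hD hcard e he
  refine ⟨e, he, ?_⟩
  by_contra he3
  -- otherwise `e = 3t+4`, and the vertex dominating `3t+2` is a second one in block `t` or `t+1`
  obtain ⟨f, hf, h1, h2⟩ := hD.exists_mem_near_of_pathGraph (m := 3 * t + 2) (by omega)
  by_cases hft : f.val / 3 = t
  · have := val_eq_of_div_three_eq hD hcard hf hd (by omega)
    omega
  · have := val_eq_of_div_three_eq hD hcard hf he (by omega)
    omega

theorem exists_eq_shiftDomSet : ∃ j ≤ k + 1, D = shiftDomSet k j := by
  have h2 := val_mod_three_ne_two hD hcard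
  obtain ⟨j, hj, hjt⟩ := exists_threshold_of_forall_succ (p := fun t => ∃ d ∈ D, d.val = 3 * t)
    fun t ht => exists_mem_eq_three_mul_succ hD hcard ht
  refine ⟨j, hj, ext fun i => ?_⟩
  have hi := i.isLt
  obtain ⟨d, hd, hdi⟩ := exists_mem_div_three_eq hD (show i.val / 3 ≤ k by omega)
  have hd2 := h2 d hd
  have hdj := hjt (i.val / 3) (by omega)
  rw [mem_shiftDomSet]
  constructor
  · intro hiD
    by_cases h0 : i.val % 3 = 0
    · exact .inr ⟨h0, hdj.mp ⟨i, hiD, by omega⟩⟩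
    · refine .inl ⟨by have := h2 i hiD; omega, Nat.lt_of_not_le fun hji => ?_⟩
      obtain ⟨e, he, hei⟩ := hdj.mpr hji
      have := val_eq_of_div_three_eq hD hcard he hiD (by omega)
      omega
  · intro hij
    have hdv : d.val = i.val := by
      by_cases h0 : d.val % 3 = 0
      · have := hdj.mp ⟨d, hd, by omega⟩
        omega
      · have : ¬ j ≤ i.val / 3 := by
          intro hle
          obtain ⟨e, he, hei⟩ := hdj.mpr hle
          have := val_eq_of_div_three_eq hD hcard he hd (by omega)
          omega
        omega
    exact Fin.ext hdv ▸ hd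

end Minimum

theorem shiftDomSet_injOn : Set.InjOn (shiftDomSet k) (Set.Iio (k + 2)) := by
  -- `3 * min a b` lies in exactly one of the two sets
  intro a ha b hb hab
  by_contra hne
  rw [Set.mem_Iio] at ha hb
  have hmin : 3 * min a b < 3 * k + 2 := by omega
  have := congrArg (⟨3 * min a b, hmin⟩ ∈ ·) hab
  simp only [mem_shiftDomSet, eq_iff_iff] at this
  omega

theorem minDomSets_pathGraph :
    minDomSets (pathGraph (3 * k + 2)) = shiftDomSet k '' Set.Iio (k + 2) := by
  ext D
  simp only [minDomSets, domNum_pathGraph, Set.mem_ofPred_eq, Set.mem_image, Set.mem_Iio]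
  constructor
  · rintro ⟨hD, hcard⟩
    obtain ⟨j, hj, rfl⟩ := exists_eq_shiftDomSet hD hcard.le
    exact ⟨j, by omega, rfl⟩
  · rintro ⟨j, -, rfl⟩
    exact ⟨isDomSet_shiftDomSet j, card_shiftDomSet j⟩

theorem tau_pathGraph : tau (pathGraph (3 * k + 2)) = k + 2 := by
  rw [tau, minDomSets_pathGraph, shiftDomSet_injOn.ncard_image, Set.ncard_Iio_nat]

theorem DV_pathGraph_eq_ncard (v : Fin (3 * k + 2)) :
    DV (pathGraph (3 * k + 2)) v = {j | j < k + 2 ∧ v ∈ shiftDomSet k j}.ncard := by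
  have : {D ∈ minDomSets (pathGraph (3 * k + 2)) | v ∈ D} =
      shiftDomSet k '' {j | j < k + 2 ∧ v ∈ shiftDomSet k j} := by
    ext D
    simp only [minDomSets_pathGraph, Set.mem_ofPred_eq, Set.mem_image, Set.mem_Iio]
    constructor
    · rintro ⟨⟨j, hj, rfl⟩, hv⟩
      exact ⟨j, ⟨hj, hv⟩, rfl⟩
    · rintro ⟨j, ⟨hj, hv⟩, rfl⟩
      exact ⟨⟨j, hj, rfl⟩, hv⟩
  rw [DV, this, (shiftDomSet_injOn.mono fun j hj => hj.1).ncard_image]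

variable {v : Fin (3 * k + 2)}

theorem DV_pathGraph_of_mod_three_eq_zero (hv : v.val % 3 = 0) :
    DV (pathGraph (3 * k + 2)) v = v.val / 3 + 1 := by
  have hv' := v.isLt
  rw [DV_pathGraph_eq_ncard, ← Set.ncard_Iio_nat (v.val / 3 + 1)]
  congr 1
  ext j
  simp only [mem_shiftDomSet, Set.mem_ofPred_eq, Set.mem_Iio]
  omega

theorem DV_pathGraph_of_mod_three_eq_one (hv : v.val % 3 = 1) :
    DV (pathGraph (3 * k + 2)) v = k + 1 - v.val / 3 := by
  rw [DV_pathGraph_eq_ncard, show k + 1 - v.val / 3 = k + 2 - (v.val / 3 + 1) by omega,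
    ← Set.ncard_Ico_nat]
  congr 1
  ext j
  simp only [mem_shiftDomSet, Set.mem_ofPred_eq, Set.mem_Ico]
  omega

theorem DV_pathGraph_of_mod_three_eq_two (hv : v.val % 3 = 2) :
    DV (pathGraph (3 * k + 2)) v = 0 := by
  rw [DV_pathGraph_eq_ncard, ← Set.ncard_empty ℕ]
  congr 1
  ext j
  simp only [mem_shiftDomSet, Set.mem_ofPred_eq, Set.mem_empty_iff_false, iff_false]
  omega

end PathDomination

/-- The vertex `v : Fin (3*k+2)` carries the label `v.val + 1` of the informal statement. -/
theorem stmt_19_general (k : ℕ) (v : Fin (3 * k + 2)) (q r : ℕ)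
    (hq : v.val + 1 = 3 * q + r) :
    (r = 0 → DV (SimpleGraph.pathGraph (3 * k + 2)) v = 0) ∧
    (r = 1 → DV (SimpleGraph.pathGraph (3 * k + 2)) v = 1 + q) ∧
    (r = 2 → DV (SimpleGraph.pathGraph (3 * k + 2)) v = k + 1 - q) ∧
    tau (SimpleGraph.pathGraph (3 * k + 2)) = k + 2 := by
  open PathDomination in
  refine ⟨fun hr0 => ?_, fun hr1 => ?_, fun hr2 => ?_, tau_pathGraph⟩
  · exact DV_pathGraph_of_mod_three_eq_two (by omega)
  · rw [DV_pathGraph_of_mod_three_eq_zero (by omega)]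
    omega
  · rw [DV_pathGraph_of_mod_three_eq_one (by omega)]
    omega

/-- Vertices of `SimpleGraph.pathGraph (3*k+2)` are labeled `1,…,3k+2`; vertex
`v : Fin (3*k+2)` has label `v.val + 1 = 3*q + r` with `0 ≤ r < 3`. -/
theorem stmt_19 (k : ℕ) (v : Fin (3 * k + 2)) (q r : ℕ)
    (hq : v.val + 1 = 3 * q + r) (hr : r < 3) :
    (r = 0 → DV (SimpleGraph.pathGraph (3 * k + 2)) v = 0) ∧
    (r = 1 → DV (SimpleGraph.pathGraph (3 * k + 2)) v = 1 + q) ∧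
    (r = 2 → DV (SimpleGraph.pathGraph (3 * k + 2)) v = k + 1 - q) ∧
    tau (SimpleGraph.pathGraph (3 * k + 2)) = k + 2 :=
  stmt_19_general k v q r hq
end
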